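/- Let {x_i}_{i∈[T]} be vectors in ℝ^d with ‖x_i‖₂ ≤ L, Λ₀ positive-definite with λ_min(Λ₀) ≥ max(1, L²), and Λ_t = Λ₀ + ∑_{i=1}^t x_i x_iᵀ. Then ∑_{i=1}^T ‖x_i‖²_{Λ_{i-1}^{-1}} ≤ 2·log(det(Λ_T)/det(Λ₀)). -/

import Mathlib

/-!
By the matrix determinant lemma, `det Λ (i+1) = det Λ i * (1 + u i)` with `u i = x i ⬝ᵥ (Λ i)⁻¹ *ᵥ x i`,
so `log (det Λ T / det Λ₀) = ∑ i < T, log (1 + u i)`. The eigenvalue condition makes every `Λ i`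
coercive with constant `c = max 1 L² ≥ ‖x i‖²`; writing `y = (Λ i)⁻¹ *ᵥ x i`, Cauchy–Schwarz gives
`u i ^ 2 ≤ ‖x i‖² ‖y‖² ≤ c ‖y‖² ≤ y ⬝ᵥ Λ i *ᵥ y = u i`, so `u i ∈ [0, 1]`, where `u ≤ 2 log (1 + u)`.
-/

open Matrix Real

section DeterminantLemma

variable {n R : Type*} [Fintype n] [DecidableEq n] [CommRing R]

theorem det_add_vecMulVec {A : Matrix n n R} (hA : IsUnit A.det) (u v : n → R) :
    (A + vecMulVec u v).det = A.det * (1 + v ⬝ᵥ A⁻¹ *ᵥ u) := by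
  have hfactor : A + vecMulVec u v = A * (1 + vecMulVec (A⁻¹ *ᵥ u) v) := by
    rw [Matrix.mul_add, Matrix.mul_one, mul_vecMulVec, mulVec_mulVec, mul_nonsing_inv _ hA,
      one_mulVec]
  rw [hfactor, det_mul, vecMulVec_eq Unit, det_one_add_replicateCol_mul_replicateRow]

theorem det_eq_det_mul_prod_of_succ_eq_add_vecMulVec {Λ : ℕ → Matrix n n R} {x : ℕ → n → R}
    (hΛ : ∀ t, Λ (t + 1) = Λ t + vecMulVec (x t) (x t)) (hdet : ∀ t, IsUnit (Λ t).det) (T : ℕ) :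
    (Λ T).det = (Λ 0).det * ∏ i ∈ Finset.range T, (1 + x i ⬝ᵥ (Λ i)⁻¹ *ᵥ x i) := by
  induction T with
  | zero => simp
  | succ T ih => rw [hΛ, det_add_vecMulVec (hdet T), ih, Finset.prod_range_succ, mul_assoc]

end DeterminantLemma

section RankOne

variable {n : Type*} [Fintype n]

theorem dotProduct_mulVec_vecMulVec_self {R : Type*} [CommSemiring R] (w v : n → R) :
    v ⬝ᵥ vecMulVec w w *ᵥ v = (w ⬝ᵥ v) ^ 2 := by
  rw [vecMulVec_mulVec, op_smul_eq_smul, dotProduct_smul, smul_eq_mul, dotProduct_comm, sq]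

theorem dotProduct_mulVec_sum_vecMulVec_self_nonneg {ι : Type*} (s : Finset ι) (w : ι → n → ℝ)
    (v : n → ℝ) : 0 ≤ v ⬝ᵥ (∑ i ∈ s, vecMulVec (w i) (w i)) *ᵥ v := by
  rw [sum_mulVec, dotProduct_sum]
  exact Finset.sum_nonneg fun i _ => by rw [dotProduct_mulVec_vecMulVec_self]; positivity

end RankOne

section Coercive

variable {n : Type*} [Fintype n] [DecidableEq n] {A : Matrix n n ℝ} {c : ℝ}

theorem isUnit_det_of_coercive (hc : 0 < c) (hA : ∀ v, c * ∑ j, v j ^ 2 ≤ v ⬝ᵥ A *ᵥ v) :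
    IsUnit A.det := by
  rw [isUnit_iff_ne_zero, Ne, ← exists_mulVec_eq_zero_iff]
  rintro ⟨v, hv, hAv⟩
  have hsum : ∑ j, v j ^ 2 ≤ 0 := by
    have := hA v
    rw [hAv, dotProduct_zero] at this
    exact nonpos_of_mul_nonpos_right this hc
  refine hv (funext fun j => ?_)
  have := (Finset.sum_eq_zero_iff_of_nonneg fun j _ => sq_nonneg (v j)).1
    (le_antisymm hsum (by positivity)) j (Finset.mem_univ j)
  simpa using this

theorem mul_sum_sq_inv_mulVec_le (hc : 0 < c) (hA : ∀ v, c * ∑ j, v j ^ 2 ≤ v ⬝ᵥ A *ᵥ v)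
    (x : n → ℝ) : c * ∑ j, (A⁻¹ *ᵥ x) j ^ 2 ≤ x ⬝ᵥ A⁻¹ *ᵥ x := by
  have := hA (A⁻¹ *ᵥ x)
  rwa [mulVec_mulVec, mul_nonsing_inv _ (isUnit_det_of_coercive hc hA), one_mulVec,
    dotProduct_comm] at this

theorem dotProduct_inv_mulVec_mem_Icc (hc : 0 < c) (hA : ∀ v, c * ∑ j, v j ^ 2 ≤ v ⬝ᵥ A *ᵥ v)
    {x : n → ℝ} (hx : ∑ j, x j ^ 2 ≤ c) : x ⬝ᵥ A⁻¹ *ᵥ x ∈ Set.Icc 0 1 := by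
  set y := A⁻¹ *ᵥ x
  set u := x ⬝ᵥ y
  have hy : c * ∑ j, y j ^ 2 ≤ u := mul_sum_sq_inv_mulVec_le hc hA x
  have hu_sq : u ^ 2 ≤ u :=
    calc u ^ 2 ≤ (∑ j, x j ^ 2) * ∑ j, y j ^ 2 := Finset.sum_mul_sq_le_sq_mul_sq _ x y
      _ ≤ c * ∑ j, y j ^ 2 := by gcongr
      _ ≤ u := hy
  have hu : 0 ≤ u := le_trans (by positivity) hy
  exact ⟨hu, by nlinarith⟩

end Coercive

theorem le_two_mul_log_one_add {u : ℝ} (h0 : 0 ≤ u) (h1 : u ≤ 1) : u ≤ 2 * log (1 + u) := by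
  have hpos : 0 < 1 + u := by linarith
  have hlog : u / (1 + u) ≤ log (1 + u) := by
    calc u / (1 + u) = 1 - (1 + u)⁻¹ := by field_simp; ring
      _ ≤ log (1 + u) := one_sub_inv_le_log_of_pos hpos
  have hhalf : u ≤ 2 * (u / (1 + u)) := by
    rw [mul_div_assoc', le_div_iff₀ hpos]
    nlinarith
  linarith

theorem stmt_9_general {d : ℕ} (T : ℕ) (L : ℝ) (x : ℕ → Fin d → ℝ)
    (hx : ∀ i, Real.sqrt (∑ j, (x i j)^2) ≤ L)
    (Λ₀ : Matrix (Fin d) (Fin d) ℝ)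
    (hmin : ∀ v : Fin d → ℝ, max 1 (L^2) * (∑ j, (v j)^2) ≤ v ⬝ᵥ Λ₀.mulVec v)
    (Λ : ℕ → Matrix (Fin d) (Fin d) ℝ)
    (hΛ : ∀ t, Λ t = Λ₀ + ∑ i ∈ Finset.range t, vecMulVec (x i) (x i)) :
    ∑ i ∈ Finset.range T, x i ⬝ᵥ ((Λ i)⁻¹).mulVec (x i)
      ≤ 2 * Real.log ((Λ T).det / Λ₀.det) := by
  set c := max 1 (L ^ 2)
  have hc : 0 < c := one_pos.trans_le (le_max_left _ _)
  have hcoercive : ∀ t v, c * ∑ j, v j ^ 2 ≤ v ⬝ᵥ Λ t *ᵥ v := fun t v => by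
    rw [hΛ, add_mulVec, dotProduct_add]
    exact (hmin v).trans (le_add_of_nonneg_right (dotProduct_mulVec_sum_vecMulVec_self_nonneg ..))
  have hxc : ∀ i, ∑ j, x i j ^ 2 ≤ c := fun i => (sqrt_le_iff.1 (hx i)).2.trans (le_max_right _ _)
  have hu : ∀ i, x i ⬝ᵥ (Λ i)⁻¹ *ᵥ x i ∈ Set.Icc 0 1 := fun i =>
    dotProduct_inv_mulVec_mem_Icc hc (hcoercive i) (hxc i)
  have hΛ₀ : Λ 0 = Λ₀ := by simp [hΛ]
  have hratio : (Λ T).det / Λ₀.det = ∏ i ∈ Finset.range T, (1 + x i ⬝ᵥ (Λ i)⁻¹ *ᵥ x i) := by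
    have hdet : ∀ t, IsUnit (Λ t).det := fun t => isUnit_det_of_coercive hc (hcoercive t)
    have hstep : ∀ t, Λ (t + 1) = Λ t + vecMulVec (x t) (x t) := fun t => by
      rw [hΛ, hΛ, Finset.sum_range_succ, add_assoc]
    rw [det_eq_det_mul_prod_of_succ_eq_add_vecMulVec hstep hdet, hΛ₀,
      mul_div_cancel_left₀ _ (hΛ₀ ▸ hdet 0).ne_zero]
  rw [hratio, log_prod fun i _ => by linarith [(hu i).1], Finset.mul_sum]
  exact Finset.sum_le_sum fun i _ => le_two_mul_log_one_add (hu i).1 (hu i).2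

/-- Elliptical potential lemma under a minimum-eigenvalue condition: if `‖x i‖₂ ≤ L`,
`λ_min(Λ₀) ≥ max(1, L²)`, and `Λ t = Λ₀ + ∑_{i<t} x i x iᵀ`, then
`∑_{i<T} ‖x i‖²_{(Λ i)⁻¹} ≤ 2 log(det (Λ T) / det Λ₀)`. -/
theorem stmt_9 {d : ℕ} (T : ℕ) (L : ℝ) (x : ℕ → Fin d → ℝ)
    (hx : ∀ i, Real.sqrt (∑ j, (x i j)^2) ≤ L)
    (Λ₀ : Matrix (Fin d) (Fin d) ℝ) (hΛ₀ : Λ₀.PosDef)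
    (hmin : ∀ v : Fin d → ℝ, max 1 (L^2) * (∑ j, (v j)^2) ≤ v ⬝ᵥ Λ₀.mulVec v)
    (Λ : ℕ → Matrix (Fin d) (Fin d) ℝ)
    (hΛ : ∀ t, Λ t = Λ₀ + ∑ i ∈ Finset.range t, vecMulVec (x i) (x i)) :
    ∑ i ∈ Finset.range T, x i ⬝ᵥ ((Λ i)⁻¹).mulVec (x i)
      ≤ 2 * Real.log ((Λ T).det / Λ₀.det) :=
  stmt_9_general T L x hx Λ₀ hmin Λ hΛ
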